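/- Let f : (0,∞) × S² → ℝ be a smooth function with compact support (where S² is the unit sphere in ℝ³). Then for every θ > 0, ∫_{S²} |f(θ,ξ)|² dS_ξ ≤ (2/sinh²θ) · (∫_θ^∞ ∫_{S²} |f(θ̃,ξ)|² sinh²θ̃ dS_ξ dθ̃)^{1/2} · (∫_θ^∞ ∫_{S²} |∂_θ f(θ̃,ξ)|² sinh²θ̃ dS_ξ dθ̃)^{1/2}, where dS_ξ is the surface measure on the unit sphere S². -/

import Mathlib

open MeasureTheory Real Set
open scoped ContDiff

noncomputable section

/-- Euclidean space ℝ³. -/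
abbrev Spc : Type := EuclideanSpace ℝ (Fin 3)

/-- Space-time [0,∞) × ℝ³ (modelled inside ℝ × ℝ³). -/
abbrev SpaceTime : Type := ℝ × Spc

/-- Time derivative ∂_t. -/
def dt (u : SpaceTime → ℝ) : SpaceTime → ℝ := fun p => fderiv ℝ u p (1, 0)

/-- Spatial derivative ∂_i. -/
def dx (i : Fin 3) (u : SpaceTime → ℝ) : SpaceTime → ℝ :=
  fun p => fderiv ℝ u p (0, EuclideanSpace.single i 1)

/-- ∂_a for a = 0,…,3, with the convention ∂₀ = −∂_t. -/
def pd (a : Fin 4) (u : SpaceTime → ℝ) : SpaceTime → ℝ :=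
  if a.val = 0 then (fun p => - dt u p) else dx ⟨a.val - 1, by have := a.isLt; omega⟩ u

/-- ∂_a for a = 0,…,3, with the convention that index 0 is ∂_t. -/
def pD (a : Fin 4) (u : SpaceTime → ℝ) : SpaceTime → ℝ :=
  if a.val = 0 then dt u else dx ⟨a.val - 1, by have := a.isLt; omega⟩ u

/-- Coordinate functions, x₀ = t. -/
def coord (a : Fin 4) (p : SpaceTime) : ℝ :=
  if a.val = 0 then p.1 else p.2 ⟨a.val - 1, by have := a.isLt; omega⟩

/-- Ω_{ab} = x_a ∂_b − x_b ∂_a. -/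
def Omega (a b : Fin 4) (u : SpaceTime → ℝ) : SpaceTime → ℝ :=
  fun p => coord a p * pd b u p - coord b p * pd a u p

/-- The D'Alembertian □ = ∂_t² − ∂₁² − ∂₂² − ∂₃². -/
def dAlem (u : SpaceTime → ℝ) : SpaceTime → ℝ :=
  fun p => dt (dt u) p - ∑ i : Fin 3, dx i (dx i u) p

/-- The ten Γ operators: ∂_t, ∂₁, ∂₂, ∂₃ and the six Ω_{ab}, 0 ≤ a < b ≤ 3. -/
def Gam : Fin 10 → (SpaceTime → ℝ) → (SpaceTime → ℝ) :=
  ![dt, dx 0, dx 1, dx 2, Omega 0 1, Omega 0 2, Omega 0 3, Omega 1 2, Omega 1 3, Omega 2 3]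

/-- Γ^α for a 10-index α, the Γ's being composed in a fixed ordering. -/
def GammaPow (α : Fin 10 → ℕ) (u : SpaceTime → ℝ) : SpaceTime → ℝ :=
  (List.finRange 10).foldr (fun i v => (Gam i)^[α i] v) u

/-- The (finite) set of all 10-indices of size at most N. -/
def idxLe (N : ℕ) : Finset (Fin 10 → ℕ) :=
  (Fintype.piFinset fun _ => Finset.range (N + 1)).filter fun α => ∑ i, α i ≤ N

/-- The energy ℰ(u(t,·)) = (‖u(t,·)‖² + Σ_{a=0}^3 ‖∂_a u(t,·)‖²)^{1/2}. -/
def calE (u : SpaceTime → ℝ) (t : ℝ) : ℝ :=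
  Real.sqrt (∫ x : Spc, ((u (t, x)) ^ 2 + ∑ a : Fin 4, (pd a u (t, x)) ^ 2))

/-- The generalized Sobolev norm ‖u(t,·)‖_{Γ,N}. -/
def gNorm (N : ℕ) (u : SpaceTime → ℝ) (t : ℝ) : ℝ :=
  ∑ α ∈ idxLe N, calE (GammaPow α u) t

/-- Supremum over times t ≥ 0. -/
def supT (F : ℝ → ℝ) : ℝ := ⨆ t : {t : ℝ // 0 ≤ t}, F t.1

/-- The space-time norm ‖u‖_N = sup_{t ≥ 0} ‖u(t,·)‖_{Γ,N}. -/
def uNorm (N : ℕ) (u : SpaceTime → ℝ) : ℝ := supT (gNorm N u)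

/-- The weighted norm E_{k,N}(g) = sup_{t ≥ 0} (1+t)^k ‖g(t,·)‖_{Γ,N}. -/
def eNorm (k : ℝ) (N : ℕ) (g : SpaceTime → ℝ) : ℝ :=
  supT fun t => (1 + t) ^ k * gNorm N g t

/-- The L^∞-norm in the space variable. -/
def supX (u : SpaceTime → ℝ) (t : ℝ) : ℝ := ⨆ x : Spc, |u (t, x)|

/-- The norm |u(t,·)|_{Γ,N}. -/
def gSupNorm (N : ℕ) (u : SpaceTime → ℝ) (t : ℝ) : ℝ :=
  ∑ α ∈ idxLe N, (supX (GammaPow α u) t + ∑ a : Fin 4, supX (pd a (GammaPow α u)) t)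

/-- The weighted decay norm |u|_{k,N} = sup_{t ≥ 0} (1+t)^k |u(t,·)|_{Γ,N}. -/
def dNorm (k : ℝ) (N : ℕ) (u : SpaceTime → ℝ) : ℝ :=
  supT fun t => (1 + t) ^ k * gSupNorm N u t


/-- The surface measure on the unit sphere S² ⊆ ℝ³. -/
def sphereMeasure : MeasureTheory.Measure (Metric.sphere (0 : Spc) 1) :=
  (MeasureTheory.volume : MeasureTheory.Measure Spc).toSphere

end

/-!
By the fundamental theorem of calculus in `θ`, for compactly supported `f`,
`∫_{S²} f(θ)² = -∫_θ^∞ ∫_{S²} 2 f ∂_θ f`. Since `sinh` is increasing, `1 ≤ sinh² θ̃ / sinh² θ` for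
`θ̃ > θ`, so the right side is at most `(2 / sinh² θ) ∫∫ (|f| sinh θ̃) (|∂_θ f| sinh θ̃)`, and
Cauchy–Schwarz on `(θ, ∞) × S²` concludes.
-/

theorem integral_mul_le_sqrt_integral_sq_mul_sqrt_integral_sq {α : Type*} [MeasurableSpace α]
    {μ : Measure α} {f g : α → ℝ} (hf : MemLp f 2 μ) (hg : MemLp g 2 μ) :
    ∫ a, f a * g a ∂μ ≤ √(∫ a, f a ^ 2 ∂μ) * √(∫ a, g a ^ 2 ∂μ) := by
  have hpq : Real.HolderConjugate 2 2 := .two_two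
  have h2 : ENNReal.ofReal 2 = 2 := by norm_num
  have holder := integral_mul_le_Lp_mul_Lq_of_nonneg hpq
    (ae_of_all μ fun a => abs_nonneg (f a))
    (ae_of_all μ fun a => abs_nonneg (g a))
    (h2 ▸ hf.abs) (h2 ▸ hg.abs)
  simp only [Real.rpow_two, sq_abs, ← Real.sqrt_eq_rpow] at holder
  calc ∫ a, f a * g a ∂μ ≤ ∫ a, |f a| * |g a| ∂μ :=
        integral_mono (hf.integrable_mul hg) (hf.abs.integrable_mul hg.abs)
          fun a => (abs_mul (f a) (g a)).symm ▸ le_abs_self _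
    _ ≤ _ := holder

theorem neg_two_mul_le_two_div_sq_mul {a b s r : ℝ} (hs : 0 < s) (hsr : s ≤ r) :
    -(2 * a * b) ≤ 2 / s ^ 2 * (|a| * r * (|b| * r)) := by
  have hab : -(a * b) ≤ |a| * |b| := abs_mul a b ▸ neg_le_abs _
  have hsr2 : s ^ 2 ≤ r ^ 2 := pow_le_pow_left₀ hs.le hsr 2
  rw [div_mul_eq_mul_div, le_div_iff₀ (by positivity)]
  nlinarith [mul_le_mul_of_nonneg_left hsr2 (by positivity : 0 ≤ |a| * |b|)]

theorem HasCompactSupport.integral_Ioi_eq_neg {φ φ' : ℝ → ℝ} (hc : HasCompactSupport φ)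
    (hφ : ∀ t, HasDerivAt φ (φ' t) t) (hφ' : Continuous φ') (a : ℝ) :
    ∫ t in Ioi a, φ' t = -φ a := by
  have hderiv : deriv φ = φ' := funext fun t => (hφ t).deriv
  have hC1 : ContDiff ℝ 1 φ :=
    contDiff_one_iff_deriv.mpr ⟨fun t => (hφ t).differentiableAt, hderiv ▸ hφ'⟩
  rw [← hderiv, hc.integral_Ioi_deriv_eq hC1]

theorem HasCompactSupport.comp_prodMk_left {X Y M : Type*} [TopologicalSpace X] [R1Space X]
    [TopologicalSpace Y] [Zero M] {F : X × Y → M} (hF : HasCompactSupport F) (y : Y) :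
    HasCompactSupport fun x => F (x, y) :=
  .intro (hF.image continuous_fst) fun _ hx =>
    image_eq_zero_of_notMem_tsupport fun h => hx ⟨_, h, rfl⟩

section ProductWithInterval

variable {X : Type*} [TopologicalSpace X] [MeasurableSpace X] [OpensMeasurableSpace X]
  {ν : Measure X} [IsFiniteMeasureOnCompacts ν]

theorem Continuous.integrable_prod_restrict_Ioi {F : ℝ × X → ℝ} (hF : Continuous F)
    (hFc : HasCompactSupport F) (θ : ℝ) :
    Integrable F ((volume.restrict (Ioi θ)).prod ν) :=
  hF.integrable_of_hasCompactSupport hFc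

theorem integral_eq_neg_integral_Ioi_integral [SFinite ν] {F F' : ℝ × X → ℝ}
    (hFc : HasCompactSupport F) (hF' : Continuous F') (hF'c : HasCompactSupport F')
    (hderiv : ∀ t x, HasDerivAt (fun s => F (s, x)) (F' (t, x)) t) (θ : ℝ) :
    ∫ x, F (θ, x) ∂ν = -∫ t in Ioi θ, ∫ x, F' (t, x) ∂ν := by
  have hslice : ∀ x, ∫ t in Ioi θ, F' (t, x) = -F (θ, x) := fun x =>
    (hFc.comp_prodMk_left x).integral_Ioi_eq_neg (hderiv · x) (hF'.comp (.prodMk_left x)) θ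
  rw [integral_integral_swap (f := fun t x => F' (t, x))
    (hF'.integrable_prod_restrict_Ioi hF'c θ), ← integral_neg]
  simp only [hslice, neg_neg]

theorem integral_sq_le_two_div_sq_mul_sqrt_mul_sqrt [SFinite ν] {F F' : ℝ × X → ℝ}
    (hF : Continuous F) (hF' : Continuous F') (hFc : HasCompactSupport F)
    (hF'c : HasCompactSupport F')
    (hderiv : ∀ t x, HasDerivAt (fun s => F (s, x)) (F' (t, x)) t)
    {w : ℝ → ℝ} (hw : Continuous w) {θ : ℝ} (hwθ : 0 < w θ) (hw_mono : ∀ t, θ < t → w θ ≤ w t) :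
    ∫ x, F (θ, x) ^ 2 ∂ν ≤ 2 / w θ ^ 2 *
      √(∫ t in Ioi θ, ∫ x, F (t, x) ^ 2 * w t ^ 2 ∂ν) *
      √(∫ t in Ioi θ, ∫ x, F' (t, x) ^ 2 * w t ^ 2 ∂ν) := by
  set μ := (volume.restrict (Ioi θ)).prod ν
  set G : ℝ × X → ℝ := fun p => |F p| * w p.1
  set G' : ℝ × X → ℝ := fun p => |F' p| * w p.1
  have hG : Continuous G := hF.abs.mul (hw.comp continuous_fst)
  have hG' : Continuous G' := hF'.abs.mul (hw.comp continuous_fst)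
  have hGc : HasCompactSupport G := hFc.comp_left (g := fun a => |a|) abs_zero |>.mul_right
  have hG'c : HasCompactSupport G' := hF'c.comp_left (g := fun a => |a|) abs_zero |>.mul_right
  have hweighted : ∀ {H : ℝ × X → ℝ}, Continuous H → HasCompactSupport H →
      ∫ p, (|H p| * w p.1) ^ 2 ∂μ = ∫ t in Ioi θ, ∫ x, H (t, x) ^ 2 * w t ^ 2 ∂ν := by
    intro H hH hHc
    simp only [mul_pow, sq_abs]
    refine integral_prod _ (Continuous.integrable_prod_restrict_Ioi ?_ ?_ θ)
    · exact (hH.pow 2).mul ((hw.comp continuous_fst).pow 2)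
    · exact (hHc.comp_left (g := fun a => a ^ 2) (zero_pow two_ne_zero)).mul_right
  have hprod : Integrable (fun p => 2 * F p * F' p) μ :=
    (continuous_const.mul hF |>.mul hF').integrable_prod_restrict_Ioi
      (hF'c.mul_left (f := fun p => 2 * F p)) θ
  have hFTC : ∫ x, F (θ, x) ^ 2 ∂ν = ∫ p, -(2 * F p * F' p) ∂μ := by
    rw [integral_neg, integral_prod _ hprod]
    exact integral_eq_neg_integral_Ioi_integral (F := fun p => F p ^ 2)
      (hFc.comp_left (g := fun a => a ^ 2) (zero_pow two_ne_zero))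
      (continuous_const.mul hF |>.mul hF') (hF'c.mul_left (f := fun p => 2 * F p))
      (fun t x => by simpa using (hderiv t x).fun_pow 2) θ
  have hbound : ∀ᵐ p ∂μ, -(2 * F p * F' p) ≤ 2 / w θ ^ 2 * (G p * G' p) := by
    filter_upwards [Measure.quasiMeasurePreserving_fst.ae (ae_restrict_mem measurableSet_Ioi)]
      with p hp
    exact neg_two_mul_le_two_div_sq_mul hwθ (hw_mono p.1 hp)
  calc ∫ x, F (θ, x) ^ 2 ∂ν = ∫ p, -(2 * F p * F' p) ∂μ := hFTC
    _ ≤ ∫ p, 2 / w θ ^ 2 * (G p * G' p) ∂μ := by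
        refine integral_mono_ae hprod.neg ?_ hbound
        exact (hG.mul hG').integrable_prod_restrict_Ioi hG'c.mul_left θ |>.const_mul _
    _ = 2 / w θ ^ 2 * ∫ p, G p * G' p ∂μ := integral_const_mul _ _
    _ ≤ 2 / w θ ^ 2 * (√(∫ p, G p ^ 2 ∂μ) * √(∫ p, G' p ^ 2 ∂μ)) := by
        gcongr
        exact integral_mul_le_sqrt_integral_sq_mul_sqrt_integral_sq
          (hG.memLp_of_hasCompactSupport hGc) (hG'.memLp_of_hasCompactSupport hG'c)
    _ = _ := by rw [hweighted hF hFc, hweighted hF' hF'c, mul_assoc]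

end ProductWithInterval

theorem hasDerivAt_dt {u : SpaceTime → ℝ} {t : ℝ} {x : Spc} (hu : DifferentiableAt ℝ u (t, x)) :
    HasDerivAt (fun s => u (s, x)) (dt u (t, x)) t :=
  hu.hasFDerivAt.comp_hasDerivAt t ((hasDerivAt_id t).prodMk (hasDerivAt_const t x))

theorem ContDiff.continuous_dt {u : SpaceTime → ℝ} {n : WithTop ℕ∞} (hu : ContDiff ℝ n u)
    (hn : n ≠ 0) : Continuous (dt u) :=
  (hu.continuous_fderiv hn).clm_apply continuous_const

theorem HasCompactSupport.dt {u : SpaceTime → ℝ} (hu : HasCompactSupport u) :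
    HasCompactSupport (dt u) :=
  hu.fderiv_apply ℝ (1, 0)

instance isFiniteMeasure_sphereMeasure : IsFiniteMeasure sphereMeasure := by
  unfold sphereMeasure
  infer_instance

/-- the key integral inequality on the unit hyperboloid: for f smooth with
compact support, ∫_{S²} f(θ,ξ)² dS_ξ ≤ (2/sinh²θ) ‖f‖_{L²} ‖∂_θ f‖_{L²}, the L² norms being
taken with respect to the measure sinh²θ̃ dθ̃ dS_ξ on [θ,∞) × S². -/
theorem hyperboloid_integral_inequality (f : ℝ × Spc → ℝ)
    (hf : ContDiff ℝ ∞ f) (hfc : HasCompactSupport f)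
    (θ : ℝ) (hθ : 0 < θ) :
    (∫ ξ : Metric.sphere (0 : Spc) 1, (f (θ, (ξ : Spc))) ^ 2 ∂sphereMeasure)
      ≤ (2 / Real.sinh θ ^ 2) *
        Real.sqrt (∫ θ' in Set.Ioi θ, ∫ ξ : Metric.sphere (0 : Spc) 1,
            (f (θ', (ξ : Spc))) ^ 2 * Real.sinh θ' ^ 2 ∂sphereMeasure) *
        Real.sqrt (∫ θ' in Set.Ioi θ, ∫ ξ : Metric.sphere (0 : Spc) 1,
            (dt f (θ', (ξ : Spc))) ^ 2 * Real.sinh θ' ^ 2 ∂sphereMeasure) := by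
  have hι : Topology.IsClosedEmbedding (Prod.map id Subtype.val :
      ℝ × Metric.sphere (0 : Spc) 1 → ℝ × Spc) :=
    .prodMap .id Metric.isClosed_sphere.isClosedEmbedding_subtypeVal
  exact integral_sq_le_two_div_sq_mul_sqrt_mul_sqrt (F := f ∘ Prod.map id Subtype.val)
    (F' := dt f ∘ Prod.map id Subtype.val)
    (hf.continuous.comp hι.continuous) ((hf.continuous_dt (by simp)).comp hι.continuous)
    (hfc.comp_isClosedEmbedding hι) (hfc.dt.comp_isClosedEmbedding hι)
    (fun _ _ => hasDerivAt_dt (hf.differentiable (by simp) _)) continuous_sinh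
    (sinh_pos_iff.mpr hθ) fun _ ht => sinh_le_sinh.mpr ht.le
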